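/- arXiv:1910.05952 — 2 statements merged into one kernel-verified Lean document; each statement's English description precedes it below -/
import Mathlib

section
/- Every finite cyclic group that embeds into SO(3, ℝ) as the image of a rank-3 integral representation fixing a vector has order n with φ(n) ≤ 2, where φ is the Euler totient function; equivalently n ∈ {1, 2, 3, 4, 6}. In particular: if n is a positive integer with φ(n) ≤ 2 then n ∈ {1, 2, 3, 4, 6}. -/
open Matrix Polynomial

-- Part 2 auxiliary
lemma aux_tot (n : ℕ) (hn : 0 < n) (h : Nat.totient n ≤ 2) :
    n ∈ ({1, 2, 3, 4, 6} : Set ℕ) := by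
  have h12 : n ∣ 12 := by
    rw [← Nat.factorization_le_iff_dvd hn.ne' (by norm_num)]
    rw [Finsupp.le_def]
    intro p
    by_cases hp : p.Prime
    · set k := n.factorization p with hk
      have hdvd : p ^ k ∣ n := Nat.ordProj_dvd n p
      have htot : Nat.totient (p ^ k) ∣ Nat.totient n := Nat.totient_dvd_of_dvd hdvd
      have hle : Nat.totient (p ^ k) ≤ 2 :=
        le_trans (Nat.le_of_dvd (Nat.totient_pos.2 hn) htot) h
      rcases Nat.eq_zero_or_pos k with hk0 | hkpos
      · simp [hk0]
      rw [Nat.totient_prime_pow hp hkpos] at hle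
      have hp2 : 2 ≤ p := hp.two_le
      have hple : p - 1 ≤ 2 := by
        calc p - 1 ≤ p ^ (k - 1) * (p - 1) :=
              Nat.le_mul_of_pos_left _ (pow_pos hp.pos _)
          _ ≤ 2 := hle
      have hp3 : p ≤ 3 := by omega
      interval_cases p
      · -- p = 2
        have : (2:ℕ) ^ (k-1) ≤ 2 := by omega
        have hk2 : k - 1 ≤ 1 := by
          by_contra hc
          push_neg at hc
          have : (2:ℕ)^2 ≤ 2^(k-1) := Nat.pow_le_pow_right (by norm_num) (by omega)
          omega
        have : k ≤ 2 := by omega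
        have h122 : (12:ℕ).factorization 2 = 2 := by
          have h412 : (12:ℕ) = 2^2*3 := by norm_num
          rw [h412, Nat.factorization_mul (by norm_num) (by norm_num), Finsupp.add_apply,
            Nat.Prime.factorization_pow (by norm_num : Nat.Prime 2),
            Nat.Prime.factorization (by norm_num : Nat.Prime 3)]
          simp [Finsupp.single_apply]
        omega
      · -- p = 3
        have hk1 : k ≤ 1 := by
          by_contra hc
          push_neg at hc
          have : (3:ℕ)^1 ≤ 3^(k-1) := Nat.pow_le_pow_right (by norm_num) (by omega)
          have := hle
          nlinarith
        have h123 : (12:ℕ).factorization 3 = 1 := by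
          have h412 : (12:ℕ) = 2^2*3 := by norm_num
          rw [h412, Nat.factorization_mul (by norm_num) (by norm_num), Finsupp.add_apply,
            Nat.Prime.factorization_pow (by norm_num : Nat.Prime 2),
            Nat.Prime.factorization (by norm_num : Nat.Prime 3)]
          simp [Finsupp.single_apply]
        omega
    · simp [Nat.factorization_eq_zero_of_not_prime _ hp]
  have hle12 : n ≤ 12 := Nat.le_of_dvd (by norm_num) h12
  interval_cases n <;> revert h h12 <;> decide

-- combinatorial lcm lemma
lemma aux_lcm : ∀ S : Finset ℕ, S ∈ ({1,2,3,4,6} : Finset ℕ).powerset →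
    S.sum Nat.totient ≤ 3 → S.lcm id ∈ ({1,2,3,4,6} : Finset ℕ) := by decide

lemma main_aux (g : GL (Fin 3) ℤ) (hfin : IsOfFinOrder g) :
    orderOf g ∈ ({1, 2, 3, 4, 6} : Set ℕ) := by
  classical
  set n := orderOf g with hn
  have hnpos : 0 < n := hfin.orderOf_pos
  set f : Matrix (Fin 3) (Fin 3) ℤ →+* Matrix (Fin 3) (Fin 3) ℚ :=
    (Int.castRingHom ℚ).mapMatrix with hf
  set M : Matrix (Fin 3) (Fin 3) ℚ := f g.val with hM
  have hpow : ∀ k : ℕ, M ^ k = f (g.val ^ k) := fun k => (map_pow f _ k).symm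
  have hMn : M ^ n = 1 := by
    rw [hpow, ← Units.val_pow_eq_pow_val, hn, pow_orderOf_eq_one g]
    simp
  have hinj : Function.Injective f := Matrix.map_injective Int.cast_injective
  have hker : ∀ k : ℕ, M ^ k = 1 → n ∣ k := by
    intro k hk
    apply orderOf_dvd_of_pow_eq_one
    have h1 : f (g.val ^ k) = f 1 := by rw [← hpow, hk, _root_.map_one]
    have h2 : g.val ^ k = 1 := hinj h1
    exact Units.ext (by simpa [Units.val_pow_eq_pow_val] using h2)
  have hint : IsIntegral ℚ M := ⟨M.charpoly, M.charpoly_monic, M.aeval_self_charpoly⟩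
  set p := minpoly ℚ M with hp
  have hp0 : p ≠ 0 := minpoly.ne_zero hint
  have hpdvd : p ∣ X ^ n - 1 := by
    apply minpoly.dvd
    simp [map_sub, map_pow, aeval_X, hMn]
  have hdeg : p.natDegree ≤ 3 := by
    have h1 := Polynomial.natDegree_le_of_dvd M.minpoly_dvd_charpoly M.charpoly_monic.ne_zero
    simpa using h1
  set S := n.divisors.filter (fun d => cyclotomic d ℚ ∣ p) with hS
  have hprodS : ∏ d ∈ S, cyclotomic d ℚ ∣ p := by
    apply Finset.prod_dvd_of_coprime
    · intro a ha b hb hab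
      exact cyclotomic.isCoprime_rat hab
    · intro d hd
      exact (Finset.mem_filter.mp hd).2
  have hsum : ∑ d ∈ S, Nat.totient d ≤ 3 := by
    have h1 : (∏ d ∈ S, cyclotomic d ℚ).natDegree ≤ p.natDegree :=
      Polynomial.natDegree_le_of_dvd hprodS hp0
    have h2 : (∏ d ∈ S, cyclotomic d ℚ).natDegree = ∑ d ∈ S, Nat.totient d := by
      rw [Polynomial.natDegree_prod _ _ (fun d _ => cyclotomic_ne_zero d ℚ)]
      simp [natDegree_cyclotomic]
    omega
  set L := S.lcm id with hL
  have hLdvdn : L ∣ n :=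
    Finset.lcm_dvd fun d hd => (Nat.mem_divisors.mp (Finset.mem_filter.mp hd).1).1
  have hLpos : 0 < L := Nat.pos_of_dvd_of_pos hLdvdn hnpos
  have hsplit : (X : ℚ[X]) ^ n - 1 =
      (∏ d ∈ S, cyclotomic d ℚ) *
        ∏ d ∈ n.divisors.filter (fun d => ¬ cyclotomic d ℚ ∣ p), cyclotomic d ℚ := by
    rw [← prod_cyclotomic_eq_X_pow_sub_one hnpos ℚ,
      ← Finset.prod_filter_mul_prod_filter_not n.divisors (fun d => cyclotomic d ℚ ∣ p)]
  have hcopB : IsCoprime p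
      (∏ d ∈ n.divisors.filter (fun d => ¬ cyclotomic d ℚ ∣ p), cyclotomic d ℚ) := by
    apply IsCoprime.prod_right
    intro d hd
    have hd' := Finset.mem_filter.mp hd
    have hdpos : 0 < d := Nat.pos_of_mem_divisors hd'.1
    exact (((cyclotomic.irreducible_rat hdpos).coprime_iff_not_dvd).mpr hd'.2).symm
  have hpdvdA : p ∣ ∏ d ∈ S, cyclotomic d ℚ :=
    hcopB.dvd_of_dvd_mul_right (by rw [← hsplit]; exact hpdvd)
  have hAdvd : (∏ d ∈ S, cyclotomic d ℚ) ∣ X ^ L - 1 := by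
    rw [← prod_cyclotomic_eq_X_pow_sub_one hLpos ℚ]
    apply Finset.prod_dvd_prod_of_subset
    intro d hd
    exact Nat.mem_divisors.mpr ⟨Finset.dvd_lcm hd, hLpos.ne'⟩
  have hnL : n ∣ L := by
    obtain ⟨q, hq⟩ := hpdvdA.trans hAdvd
    apply hker
    have h0 : Polynomial.aeval M ((X : ℚ[X]) ^ L - 1) = 0 := by
      rw [hq, _root_.map_mul, hp, minpoly.aeval, zero_mul]
    have h1 : M ^ L - 1 = 0 := by simpa [map_sub, map_pow, aeval_X] using h0
    rwa [sub_eq_zero] at h1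
  have hLn : L = n := Nat.dvd_antisymm hLdvdn hnL
  have hSsub : S ⊆ ({1, 2, 3, 4, 6} : Finset ℕ) := by
    intro d hd
    have hdS := Finset.mem_filter.mp hd
    have hdpos : 0 < d := Nat.pos_of_mem_divisors hdS.1
    have htd : Nat.totient d ≤ 3 :=
      le_trans (Finset.single_le_sum (fun i _ => Nat.zero_le _) hd) hsum
    have htd2 : Nat.totient d ≤ 2 := by
      rcases Nat.lt_or_ge d 3 with hlt | hge
      · interval_cases d <;> simp [Nat.totient_one]
      · obtain ⟨m, hm⟩ := Nat.totient_even (by omega : 2 < d)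
        omega
    have := aux_tot d hdpos htd2
    simpa using this
  have hmem : S.lcm id ∈ ({1, 2, 3, 4, 6} : Finset ℕ) :=
    aux_lcm S (Finset.mem_powerset.mpr hSsub) hsum
  rw [← hL, hLn] at hmem
  simpa using hmem

/-- A finite cyclic group embedded in `SO(3, ℝ)` as the image of a
rank-3 integral representation fixing a vector has order `n` with `φ(n) ≤ 2`
(crystallographic restriction), hence `n ∈ {1, 2, 3, 4, 6}`.  In particular,
every positive integer `n` with `φ(n) ≤ 2` lies in `{1, 2, 3, 4, 6}`. -/
theorem stmt_5 :
    (∀ g : GL (Fin 3) ℤ, IsOfFinOrder g → g.val.det = 1 →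
      (∃ v : Fin 3 → ℤ, v ≠ 0 ∧ g.val.mulVec v = v) →
      Nat.totient (orderOf g) ≤ 2 ∧ orderOf g ∈ ({1, 2, 3, 4, 6} : Set ℕ)) ∧
    (∀ n : ℕ, 0 < n → Nat.totient n ≤ 2 → n ∈ ({1, 2, 3, 4, 6} : Set ℕ)) := by
  constructor
  · intro g hfin _ _
    have hmem := main_aux g hfin
    refine ⟨?_, hmem⟩
    rcases hmem with h | h | h | h | h <;> rw [h] <;> decide
  · exact aux_tot
end

section
/- The lattice with Gram matrix [[2,0,0],[0,12,6],[0,6,12]] is isometric to the orthogonal direct sum (2) ⊕ A₂(6), and its orthogonal group is isomorphic to {±1} × D₆, where D₆ is the dihedral group of order 12; moreover the special orthogonal group SO of this lattice is isomorphic to D₆. -/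
open Matrix

/-- The orthogonal group of the integral lattice with Gram matrix `Q`. -/
def latticeO (Q : Matrix (Fin 3) (Fin 3) ℤ) : Subgroup (GL (Fin 3) ℤ) where
  carrier := {g | g.valᵀ * Q * g.val = Q}
  one_mem' := by simp
  mul_mem' := by
    intro a b ha hb
    simp only [Set.mem_setOf_eq] at *
    calc ((a * b).val)ᵀ * Q * (a * b).val
        = b.valᵀ * (a.valᵀ * Q * a.val) * b.val := by
          rw [Units.val_mul, Matrix.transpose_mul]; noncomm_ring
      _ = Q := by rw [ha, hb]
  inv_mem' := by
    intro a ha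
    simp only [Set.mem_setOf_eq] at *
    calc ((a⁻¹).val)ᵀ * Q * (a⁻¹).val
        = ((a⁻¹).val)ᵀ * (a.valᵀ * Q * a.val) * (a⁻¹).val := by rw [ha]
      _ = (a.val * (a⁻¹).val)ᵀ * Q * (a.val * (a⁻¹).val) := by
          rw [Matrix.transpose_mul]; noncomm_ring
      _ = Q := by
          have : a.val * (a⁻¹).val = 1 := a.mul_inv
          rw [this]; simp

/-- The special orthogonal group of the lattice with Gram matrix `Q`. -/
def latticeSO (Q : Matrix (Fin 3) (Fin 3) ℤ) : Subgroup (GL (Fin 3) ℤ) :=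
  latticeO Q ⊓ (Units.map (Matrix.detMonoidHom : Matrix (Fin 3) (Fin 3) ℤ →* ℤ)).ker

namespace Stmt8Aux

abbrev QQ : Matrix (Fin 3) (Fin 3) ℤ := !![2, 0, 0; 0, 12, 6; 0, 6, 12]
def RR : Matrix (Fin 3) (Fin 3) ℤ := !![1,0,0; 0,0,-1; 0,1,1]
def SS : Matrix (Fin 3) (Fin 3) ℤ := !![1,0,0; 0,0,1; 0,1,0]
def dm (ε : ℤˣ) : Matrix (Fin 3) (Fin 3) ℤ := !![(ε:ℤ),0,0; 0,1,0; 0,0,1]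

def fmat : ℤˣ × DihedralGroup 6 → Matrix (Fin 3) (Fin 3) ℤ
  | (ε, .r i) => dm ε * RR ^ i.val
  | (ε, .sr i) => dm ε * SS * RR ^ i.val

set_option maxHeartbeats 2000000 in
theorem fmat_mul : ∀ x y, fmat (x * y) = fmat x * fmat y := by decide

theorem fmat_one : fmat 1 = 1 := by decide

theorem fmat_mem : ∀ x, (fmat x)ᵀ * QQ * fmat x = QQ := by decide

theorem fmat_ker : ∀ x, fmat x = 1 → x = 1 := by decide

set_option maxHeartbeats 4000000 in
theorem surj9 (a b c d e f g h i : ℤ)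
    (hQ : !![a,b,c;d,e,f;g,h,i]ᵀ * QQ * !![a,b,c;d,e,f;g,h,i] = QQ) :
    ∃ x, fmat x = !![a,b,c;d,e,f;g,h,i] := by
  have ht : !![a,b,c;d,e,f;g,h,i]ᵀ = !![a,d,g;b,e,h;c,f,i] := by
    ext k l; fin_cases k <;> fin_cases l <;> rfl
  rw [ht] at hQ
  have key : ∀ k l, (!![a,d,g;b,e,h;c,f,i] * QQ * !![a,b,c;d,e,f;g,h,i]) k l = QQ k l :=
    fun k l => by rw [hQ]
  have e00 := key 0 0; have e01 := key 0 1; have e02 := key 0 2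
  have e11 := key 1 1; have e12 := key 1 2; have e22 := key 2 2
  simp [Matrix.mul_apply, Fin.sum_univ_three] at e00 e01 e02 e11 e12 e22
  ring_nf at e00 e01 e02 e11 e12 e22
  have E00 : a*a*2 + d*g*12 + d*d*12 + g*g*12 = 2 := by linear_combination e00
  have E11 : b*b*2 + e*h*12 + e*e*12 + h*h*12 = 12 := by linear_combination e11
  have E22 : c*c*2 + f*i*12 + f*f*12 + i*i*12 = 12 := by linear_combination e22
  clear e00 e11 e22 key hQ ht
  have ha1 : -1 ≤ a := by nlinarith [mul_self_nonneg (d+2*g), mul_self_nonneg (a+1)]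
  have ha2 : a ≤ 1 := by nlinarith [mul_self_nonneg (d+2*g), mul_self_nonneg (a-1)]
  have hd1 : -1 ≤ d := by nlinarith [mul_self_nonneg (d+2*g), mul_self_nonneg a, mul_self_nonneg (d+1)]
  have hd2 : d ≤ 1 := by nlinarith [mul_self_nonneg (d+2*g), mul_self_nonneg a, mul_self_nonneg (d-1)]
  have hg1 : -1 ≤ g := by nlinarith [mul_self_nonneg (g+2*d), mul_self_nonneg a, mul_self_nonneg (g+1)]
  have hg2 : g ≤ 1 := by nlinarith [mul_self_nonneg (g+2*d), mul_self_nonneg a, mul_self_nonneg (g-1)]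
  interval_cases a <;> interval_cases d <;> interval_cases g <;>
    first
    | omega
    | (have hb : b = 0 := by omega
       have hc : c = 0 := by omega
       subst hb; subst hc
       have h1 : -2 ≤ e := by nlinarith [mul_self_nonneg (e+2*h), mul_self_nonneg (e+2)]
       have h2 : e ≤ 2 := by nlinarith [mul_self_nonneg (e+2*h), mul_self_nonneg (e-2)]
       have h3 : -2 ≤ h := by nlinarith [mul_self_nonneg (h+2*e), mul_self_nonneg (h+2)]
       have h4 : h ≤ 2 := by nlinarith [mul_self_nonneg (h+2*e), mul_self_nonneg (h-2)]
       have h5 : -2 ≤ f := by nlinarith [mul_self_nonneg (f+2*i), mul_self_nonneg (f+2)]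
       have h6 : f ≤ 2 := by nlinarith [mul_self_nonneg (f+2*i), mul_self_nonneg (f-2)]
       have h7 : -2 ≤ i := by nlinarith [mul_self_nonneg (i+2*f), mul_self_nonneg (i+2)]
       have h8 : i ≤ 2 := by nlinarith [mul_self_nonneg (i+2*f), mul_self_nonneg (i-2)]
       interval_cases e <;> interval_cases h <;> interval_cases f <;> interval_cases i <;>
         first | omega | decide)

/-- the GL element attached to `x`. -/
def uPhi (x : ℤˣ × DihedralGroup 6) : GL (Fin 3) ℤ :=
  ⟨fmat x, fmat x⁻¹,
    by rw [← fmat_mul]; simp [fmat_one],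
    by rw [← fmat_mul]; simp [fmat_one]⟩

def Phi : (ℤˣ × DihedralGroup 6) →* ↥(latticeO QQ) where
  toFun x := ⟨uPhi x, fmat_mem x⟩
  map_one' := Subtype.ext (Units.ext fmat_one)
  map_mul' x y := Subtype.ext (Units.ext (fmat_mul x y))

theorem Phi_injective : Function.Injective Phi := by
  rw [injective_iff_map_eq_one]
  intro x hx
  exact fmat_ker x (by simpa [Subtype.ext_iff, Units.ext_iff, Phi, uPhi] using hx)

theorem exists_fmat (g : GL (Fin 3) ℤ) (hg : g.valᵀ * QQ * g.val = QQ) :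
    ∃ x, fmat x = g.val := by
  have hM : g.val = !![g.val 0 0, g.val 0 1, g.val 0 2; g.val 1 0, g.val 1 1, g.val 1 2;
      g.val 2 0, g.val 2 1, g.val 2 2] := by
    ext k l; fin_cases k <;> fin_cases l <;> rfl
  rw [hM] at hg
  obtain ⟨x, hx⟩ := surj9 _ _ _ _ _ _ _ _ _ hg
  exact ⟨x, hx.trans hM.symm⟩

theorem Phi_surjective : Function.Surjective Phi := by
  rintro ⟨g, hg⟩
  obtain ⟨x, hx⟩ := exists_fmat g hg
  exact ⟨x, Subtype.ext (Units.ext hx)⟩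

noncomputable def equivO : ↥(latticeO QQ) ≃* ℤˣ × DihedralGroup 6 :=
  (MulEquiv.ofBijective Phi ⟨Phi_injective, Phi_surjective⟩).symm

/-! SO part -/

def chi : DihedralGroup 6 → ℤˣ
  | .r _ => 1
  | .sr _ => -1

theorem chi_mul : ∀ x y, chi (x * y) = chi x * chi y := by decide

theorem fmat_det : ∀ d : DihedralGroup 6, (fmat (chi d, d)).det = 1 := by decide

theorem det_chi : ∀ x : ℤˣ × DihedralGroup 6, (fmat x).det = 1 → x.1 = chi x.2 := by decide

theorem mem_SO (d : DihedralGroup 6) : uPhi (chi d, d) ∈ latticeSO QQ := by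
  refine ⟨fmat_mem _, ?_⟩
  show Units.map Matrix.detMonoidHom (uPhi (chi d, d)) = 1
  exact Units.ext (fmat_det d)

def Psi : DihedralGroup 6 →* ↥(latticeSO QQ) where
  toFun d := ⟨uPhi (chi d, d), mem_SO d⟩
  map_one' := Subtype.ext (Units.ext (by
    have : ((1 : ℤˣ), (1 : DihedralGroup 6)) = (1 : ℤˣ × DihedralGroup 6) := rfl
    show fmat (chi 1, 1) = 1
    have hchi : chi 1 = 1 := by decide
    rw [hchi, this, fmat_one]))
  map_mul' x y := Subtype.ext (Units.ext (by
    show fmat (chi (x*y), x*y) = fmat (chi x, x) * fmat (chi y, y)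
    have : ((chi (x*y), x*y) : ℤˣ × DihedralGroup 6) = (chi x, x) * (chi y, y) := by
      rw [Prod.mk_mul_mk, chi_mul]
    rw [this, fmat_mul]))

theorem Psi_injective : Function.Injective Psi := by
  rw [injective_iff_map_eq_one]
  intro d hd
  have h1 : fmat (chi d, d) = 1 := by
    simpa [Subtype.ext_iff, Units.ext_iff, Psi, uPhi] using hd
  have := fmat_ker _ h1
  exact congrArg Prod.snd this

theorem Psi_surjective : Function.Surjective Psi := by
  rintro ⟨g, hgO, hgk⟩
  obtain ⟨x, hx⟩ := exists_fmat g hgO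
  have hgk' : Units.map Matrix.detMonoidHom g = 1 := hgk
  have hdet : (fmat x).det = 1 := by
    rw [hx]
    have := congrArg Units.val hgk'
    simpa using this
  have h1 := det_chi x hdet
  refine ⟨x.2, Subtype.ext (Units.ext ?_)⟩
  show fmat (chi x.2, x.2) = g.val
  rw [← h1, ← hx]

noncomputable def equivSO : ↥(latticeSO QQ) ≃* DihedralGroup 6 :=
  (MulEquiv.ofBijective Psi ⟨Psi_injective, Psi_surjective⟩).symm

end Stmt8Aux

/-- The lattice with Gram matrix `[[2,0,0],[0,12,6],[0,6,12]]` is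
isometric to the orthogonal direct sum `(2) ⊕ A₂(6)`; its orthogonal group is
isomorphic to `{±1} × D₆` (where `D₆` is the dihedral group of order 12) and
its special orthogonal group is isomorphic to `D₆`. -/
theorem stmt_8 :
    (∃ P : Matrix (Fin 3) (Fin 3) ℤ, IsUnit P.det ∧
      Pᵀ * !![2, 0, 0; 0, 12, 6; 0, 6, 12] * P =
        Matrix.reindex finSumFinEquiv finSumFinEquiv
          (Matrix.fromBlocks !![2] 0 0 !![12, 6; 6, 12])) ∧
    Nonempty (latticeO !![2, 0, 0; 0, 12, 6; 0, 6, 12] ≃* ℤˣ × DihedralGroup 6) ∧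
    Nonempty (latticeSO !![2, 0, 0; 0, 12, 6; 0, 6, 12] ≃* DihedralGroup 6) := by
  refine ⟨⟨1, by simp, by decide⟩, ⟨Stmt8Aux.equivO⟩, ⟨Stmt8Aux.equivSO⟩⟩
end
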